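/- arXiv:1104.4631 — 2 statements merged into one kernel-verified Lean document; each statement's English description precedes it below -/
import Mathlib

section
/- Let μ and μ' be finite positive Borel measures on ℝⁿ with μ' ≥ ρ·μ for some ρ > 0 (i.e., μ'(A) ≥ ρ·μ(A) for every Borel set A), and let ν be a finite signed Borel measure on ℝⁿ of total mass zero such that μ + ν is a positive measure. Then μ' + ρν is a positive measure and W₂(μ', μ' + ρν)² ≤ ρ · W₂(μ, μ + ν)². -/
open MeasureTheory ENNReal

/-- The (positive) measure associated with a nonnegative finite signed measure,
via its Jordan decomposition (for `0 ≤ s` this is exactly `s` viewed as a measure). -/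
noncomputable def toMeas {n : ℕ} (s : SignedMeasure (EuclideanSpace ℝ (Fin n))) :
    Measure (EuclideanSpace ℝ (Fin n)) :=
  s.toJordanDecomposition.posPart

/-- The quadratic Wasserstein distance `W₂(μ,ν)`, valued in `[0,∞]`. -/
noncomputable def W2 {n : ℕ} (μ ν : Measure (EuclideanSpace ℝ (Fin n))) : ℝ≥0∞ :=
  (⨅ π ∈ {π : Measure (EuclideanSpace ℝ (Fin n) × EuclideanSpace ℝ (Fin n)) |
      π.map Prod.fst = μ ∧ π.map Prod.snd = ν},
    ∫⁻ p, ENNReal.ofReal (‖p.1 - p.2‖ ^ 2) ∂π) ^ (1/2 : ℝ)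

/-!
Write `μ' = δ + ρμ` with `δ := μ' - ρμ ≥ 0` and `σ := μ + ν`. Then `μ' + ρν = δ + ρσ`, which is
visibly a positive measure. If `π` couples `μ` and `σ`, then `ρπ + (id, id)₊δ` couples `μ'` and
`δ + ρσ`: the mass `δ` common to both marginals stays in place at no cost, and the remaining cost
is `ρ` times that of `π`.
-/

open scoped NNReal

section

variable {α : Type*} [MeasurableSpace α]

lemma map_fst_smul_add_map_diag (c : ℝ≥0) (π : Measure (α × α)) (δ : Measure α) :
    (c • π + δ.map Function.diag).map Prod.fst = c • π.map Prod.fst + δ := by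
  rw [Measure.map_add _ _ measurable_fst, Measure.map_smul,
    Measure.map_map measurable_fst measurable_diag,
    Function.fst_comp_diag, Measure.map_id]

lemma map_snd_smul_add_map_diag (c : ℝ≥0) (π : Measure (α × α)) (δ : Measure α) :
    (c • π + δ.map Function.diag).map Prod.snd = c • π.map Prod.snd + δ := by
  rw [Measure.map_add _ _ measurable_snd, Measure.map_smul,
    Measure.map_map measurable_snd measurable_diag,
    Function.snd_comp_diag, Measure.map_id]

lemma lintegral_smul_add_map_diag_le {f : α × α → ℝ≥0∞} (hf : ∀ x, f (x, x) = 0) (c : ℝ≥0)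
    (π : Measure (α × α)) (δ : Measure α) :
    ∫⁻ p, f p ∂(c • π + δ.map Function.diag) ≤ c * ∫⁻ p, f p ∂π := by
  rw [lintegral_add_measure, lintegral_smul_measure, ENNReal.smul_def, smul_eq_mul]
  calc _ ≤ c * ∫⁻ p, f p ∂π + ∫⁻ x, f (Function.diag x) ∂δ := by
        gcongr; exact lintegral_map_le _ _
    _ = c * ∫⁻ p, f p ∂π := by simp [hf]

lemma toSignedMeasure_sub_smul_add_smul {μ μ' σ : Measure α}
    [IsFiniteMeasure μ] [IsFiniteMeasure μ'] [IsFiniteMeasure σ] {ν : SignedMeasure α} {r : ℝ≥0}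
    (hle : r • μ ≤ μ') (hσ : σ.toSignedMeasure = μ.toSignedMeasure + ν) :
    (μ' - r • μ + r • σ).toSignedMeasure = μ'.toSignedMeasure + r • ν := by
  have hμ' : μ'.toSignedMeasure = (μ' - r • μ).toSignedMeasure + r • μ.toSignedMeasure := by
    rw [← Measure.toSignedMeasure_smul, ← Measure.toSignedMeasure_add]
    congr
    exact (Measure.sub_add_cancel_of_le hle).symm
  rw [Measure.toSignedMeasure_add, Measure.toSignedMeasure_smul, hσ, hμ', smul_add, add_assoc]

end

section Euclidean

variable {n : ℕ}

lemma toMeas_toSignedMeasure (m : Measure (EuclideanSpace ℝ (Fin n))) [IsFiniteMeasure m] :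
    toMeas m.toSignedMeasure = m := by
  have h : m.toSignedMeasure =
      (⟨m, 0, Measure.MutuallySingular.zero_right⟩ :
        JordanDecomposition (EuclideanSpace ℝ (Fin n))).toSignedMeasure := by
    simp [JordanDecomposition.toSignedMeasure, Measure.toSignedMeasure_zero]
  rw [toMeas, SignedMeasure.toJordanDecomposition_eq h]

lemma exists_toSignedMeasure_eq_of_nonneg {s : SignedMeasure (EuclideanSpace ℝ (Fin n))}
    (hs : 0 ≤ s) : ∃ (m : Measure (EuclideanSpace ℝ (Fin n))) (_ : IsFiniteMeasure m),
      m.toSignedMeasure = s :=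
  ⟨_, inferInstance,
    s.toMeasureOfZeroLE_toSignedMeasure ((VectorMeasure.le_restrict_univ_iff_le _ _).2 hs)⟩

lemma W2_sq (μ ν : Measure (EuclideanSpace ℝ (Fin n))) :
    W2 μ ν ^ 2 = ⨅ π ∈ {π : Measure (EuclideanSpace ℝ (Fin n) × EuclideanSpace ℝ (Fin n)) |
      π.map Prod.fst = μ ∧ π.map Prod.snd = ν}, ∫⁻ p, ENNReal.ofReal (‖p.1 - p.2‖ ^ 2) ∂π := by
  rw [W2, ← ENNReal.rpow_natCast, ← ENNReal.rpow_mul]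
  norm_num

lemma W2_sq_add_smul_le (δ μ σ : Measure (EuclideanSpace ℝ (Fin n))) {c : ℝ≥0} (hc : c ≠ 0) :
    W2 (δ + c • μ) (δ + c • σ) ^ 2 ≤ c * W2 μ σ ^ 2 := by
  have hc₀ : (c : ℝ≥0∞) ≠ 0 := ENNReal.coe_ne_zero.2 hc
  simp only [W2_sq, ENNReal.mul_iInf_of_ne hc₀ ENNReal.coe_ne_top]
  refine le_iInf₂ fun π ⟨hπ₁, hπ₂⟩ ↦ iInf₂_le_of_le (c • π + δ.map Function.diag) ⟨?_, ?_⟩ ?_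
  · rw [map_fst_smul_add_map_diag, hπ₁, add_comm]
  · rw [map_snd_smul_add_map_diag, hπ₂, add_comm]
  · exact lintegral_smul_add_map_diag_le (fun x ↦ by simp) c π δ

end Euclidean

theorem W2_sq_scaling_general {n : ℕ} (μ μ' : Measure (EuclideanSpace ℝ (Fin n)))
    [IsFiniteMeasure μ] [IsFiniteMeasure μ']
    (ρ : ℝ) (hρ : 0 < ρ) (hle : ENNReal.ofReal ρ • μ ≤ μ')
    (ν : SignedMeasure (EuclideanSpace ℝ (Fin n)))
    (hpos : 0 ≤ μ.toSignedMeasure + ν) :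
    0 ≤ μ'.toSignedMeasure + ρ • ν ∧
      W2 μ' (toMeas (μ'.toSignedMeasure + ρ • ν)) ^ 2 ≤
        ENNReal.ofReal ρ * W2 μ (toMeas (μ.toSignedMeasure + ν)) ^ 2 := by
  lift ρ to ℝ≥0 using hρ.le
  rw [ENNReal.ofReal_coe_nnreal, ← ENNReal.smul_def] at hle
  rw [ENNReal.ofReal_coe_nnreal, ← NNReal.smul_def]
  obtain ⟨σ, _, hσ⟩ := exists_toSignedMeasure_eq_of_nonneg hpos
  have hsum := toSignedMeasure_sub_smul_add_smul hle hσ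
  refine ⟨hsum ▸ Measure.zero_le_toSignedMeasure _, ?_⟩
  rw [← hsum, ← hσ, toMeas_toSignedMeasure, toMeas_toSignedMeasure]
  calc W2 μ' (μ' - ρ • μ + ρ • σ) ^ 2
      = W2 (μ' - ρ • μ + ρ • μ) (μ' - ρ • μ + ρ • σ) ^ 2 := by
        rw [Measure.sub_add_cancel_of_le hle]
    _ ≤ ρ * W2 μ σ ^ 2 := W2_sq_add_smul_le _ _ _ (by exact_mod_cast hρ.ne')

/-- If `μ' ≥ ρ·μ` with `ρ > 0` and `ν` is a finite signed measure of total mass zero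
with `μ + ν ≥ 0`, then `μ' + ρν ≥ 0` and `W₂(μ', μ' + ρν)² ≤ ρ·W₂(μ, μ + ν)²`. -/
theorem W2_sq_scaling {n : ℕ} (μ μ' : Measure (EuclideanSpace ℝ (Fin n)))
    [IsFiniteMeasure μ] [IsFiniteMeasure μ']
    (ρ : ℝ) (hρ : 0 < ρ) (hle : ENNReal.ofReal ρ • μ ≤ μ')
    (ν : SignedMeasure (EuclideanSpace ℝ (Fin n))) (hν0 : ν Set.univ = 0)
    (hpos : 0 ≤ μ.toSignedMeasure + ν) :
    0 ≤ μ'.toSignedMeasure + ρ • ν ∧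
      W2 μ' (toMeas (μ'.toSignedMeasure + ρ • ν)) ^ 2 ≤
        ENNReal.ofReal ρ * W2 μ (toMeas (μ.toSignedMeasure + ν)) ^ 2 :=
  W2_sq_scaling_general μ μ' ρ hρ hle ν hpos
end

section
/- In dimension 2 the previous one-dimensional theorem fails without an upper density bound on ν: let μ be the restriction of Lebesgue measure to the closed unit ball of ℝ², and let ν := μ(ℝ²)·δ₀ be the Dirac mass at the origin with the same total mass. Then W₂(μ, ν) < ∞ but ‖ν − μ‖_{Ḣ⁻¹} = ∞. -/
open MeasureTheory ENNReal

/-- The homogeneous Sobolev norm `‖ν − μ‖_{Ḣ⁻¹(lam)}` of the difference of two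
finite positive Borel measures `μ, ν` on `ℝⁿ`, with respect to a base measure `lam`. -/
noncomputable def HminusOneDiff {n : ℕ} (lam μ ν : Measure (EuclideanSpace ℝ (Fin n))) :
    ℝ≥0∞ :=
  ⨆ f ∈ {f : EuclideanSpace ℝ (Fin n) → ℝ |
      (∃ C, ∀ x, |f x| ≤ C) ∧ ContDiff ℝ 1 f ∧
      ∫⁻ x, ENNReal.ofReal (‖gradient f x‖ ^ 2) ∂lam ≤ 1},
    ENNReal.ofReal |(∫ x, f x ∂ν) - ∫ x, f x ∂μ|

/-!
The coupling `x ↦ (x, 0)` transports `μ` to `ν` at quadratic cost at most `μ(ℝ²) = π`.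

For the `Ḣ⁻¹` norm we test against `c · logBump a`, where
`logBump a x = log (1 + |x|²) - log (a + |x|²)` is a smoothing of `-log |x|²` capped at
height `-log a`. Pointwise `|∇ logBump a|² ≤ 4/(a + r²) - 4/(1 + r²)` with `r = |x|`, and in
dimension 2 the radial integral of the right-hand side is exact: `r (4/(a + r²) - 4/(1 + r²))` is
the derivative of `2 log ((a + r²)/(1 + r²))`, which increases from `2 log a` to `0`. So the energy
is at most `-4π c² log a`, the pairing with `ν` is `-π c log a`, and the pairing with `μ` is only
`O(c log (-log a))`. With `a = exp (-m²)` and `c = 1/(4m)` the energy is at most `π/4` while the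
difference of the pairings is at least `π (m - 3)/4`.
-/

open Set Metric Filter Topology

section Wasserstein

variable {n : ℕ}

theorem W2_le_of_map_fst_of_map_snd {μ ν : Measure (EuclideanSpace ℝ (Fin n))}
    (π : Measure (EuclideanSpace ℝ (Fin n) × EuclideanSpace ℝ (Fin n)))
    (hfst : π.map Prod.fst = μ) (hsnd : π.map Prod.snd = ν) :
    W2 μ ν ≤ (∫⁻ p, ENNReal.ofReal (‖p.1 - p.2‖ ^ 2) ∂π) ^ (1 / 2 : ℝ) :=
  ENNReal.rpow_le_rpow (iInf₂_le π ⟨hfst, hsnd⟩) (by norm_num)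

theorem W2_smul_dirac_le (μ : Measure (EuclideanSpace ℝ (Fin n))) (y : EuclideanSpace ℝ (Fin n)) :
    W2 μ (μ univ • Measure.dirac y) ≤ (∫⁻ x, ENNReal.ofReal (‖x - y‖ ^ 2) ∂μ) ^ (1 / 2 : ℝ) := by
  have hmeas : Measurable fun x : EuclideanSpace ℝ (Fin n) => (x, y) :=
    measurable_id.prodMk measurable_const
  have hfst : (μ.map fun x => (x, y)).map Prod.fst = μ := by
    rw [Measure.map_map measurable_fst hmeas]
    exact Measure.map_id
  have hsnd : (μ.map fun x => (x, y)).map Prod.snd = μ univ • Measure.dirac y := by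
    rw [Measure.map_map measurable_snd hmeas]
    exact Measure.map_const μ y
  refine (W2_le_of_map_fst_of_map_snd _ hfst hsnd).trans_eq ?_
  rw [lintegral_map (by fun_prop) hmeas]

theorem W2_restrict_closedBall_smul_dirac_lt_top (y : EuclideanSpace ℝ (Fin n)) (R : ℝ) :
    W2 (volume.restrict (closedBall y R))
      (volume.restrict (closedBall y R) univ • Measure.dirac y) < ∞ := by
  have hbound : ∫⁻ x in closedBall y R, ENNReal.ofReal (‖x - y‖ ^ 2) ≤
      ENNReal.ofReal (R ^ 2) * volume (closedBall y R) := by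
    refine (setLIntegral_mono measurable_const fun x hx => ofReal_le_ofReal ?_).trans_eq
      (setLIntegral_const _ _)
    rw [mem_closedBall, dist_eq_norm] at hx
    exact pow_le_pow_left₀ (norm_nonneg _) hx 2
  exact (W2_smul_dirac_le _ y).trans_lt (rpow_lt_top_of_nonneg (by norm_num)
    (ne_top_of_le_ne_top (mul_ne_top ofReal_ne_top measure_closedBall_lt_top.ne) hbound))

end Wasserstein

theorem HminusOneDiff_eq_top_of_forall_exists {n : ℕ} {lam μ ν : Measure (EuclideanSpace ℝ (Fin n))}
    (h : ∀ M : ℝ, ∃ f : EuclideanSpace ℝ (Fin n) → ℝ, (∃ C, ∀ x, |f x| ≤ C) ∧ ContDiff ℝ 1 f ∧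
      ∫⁻ x, ENNReal.ofReal (‖gradient f x‖ ^ 2) ∂lam ≤ 1 ∧ M ≤ (∫ x, f x ∂ν) - ∫ x, f x ∂μ) :
    HminusOneDiff lam μ ν = ∞ := by
  refine eq_top_of_forall_nnreal_le fun r => ?_
  obtain ⟨f, hbdd, hf, henergy, hr⟩ := h r
  calc (r : ℝ≥0∞) = ENNReal.ofReal r := (ofReal_coe_nnreal).symm
    _ ≤ ENNReal.ofReal |(∫ x, f x ∂ν) - ∫ x, f x ∂μ| := ofReal_le_ofReal (hr.trans (le_abs_self _))
    _ ≤ HminusOneDiff lam μ ν := le_iSup₂_of_le f ⟨hbdd, hf, henergy⟩ le_rfl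

theorem HasGradientAt.const_mul {F : Type*} [NormedAddCommGroup F] [InnerProductSpace ℝ F]
    [CompleteSpace F] {f : F → ℝ} {f' x : F} (hf : HasGradientAt f f' x) (c : ℝ) :
    HasGradientAt (fun y => c * f y) (c • f') x := by
  rw [hasGradientAt_iff_hasFDerivAt] at hf ⊢
  refine (hf.const_mul c).congr_fderiv ?_
  ext y
  simp

section LogBump

variable {E : Type*} [NormedAddCommGroup E]

noncomputable def logBump (a : ℝ) (x : E) : ℝ :=
  Real.log (1 + ‖x‖ ^ 2) - Real.log (a + ‖x‖ ^ 2)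

variable {a : ℝ}

theorem logBump_zero : logBump a (0 : E) = -Real.log a := by
  simp only [logBump, norm_zero]
  norm_num

theorem logBump_nonneg (ha : 0 < a) (ha1 : a ≤ 1) (x : E) : 0 ≤ logBump a x :=
  sub_nonneg.2 <| Real.log_le_log (by positivity) (by linarith)

theorem logBump_le_neg_log (ha : 0 < a) (ha1 : a ≤ 1) (x : E) : logBump a x ≤ -Real.log a := by
  have h : Real.log (a * (1 + ‖x‖ ^ 2)) ≤ Real.log (a + ‖x‖ ^ 2) :=
    Real.log_le_log (by positivity) (by nlinarith [sq_nonneg ‖x‖])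
  rw [Real.log_mul ha.ne' (by positivity)] at h
  rw [logBump]
  linarith

theorem logBump_le_log_one_add_inv_sq (ha : 0 < a) {ρ : ℝ} (hρ : 0 < ρ) {x : E} (hx : ρ ≤ ‖x‖) :
    logBump a x ≤ Real.log (1 + (ρ ^ 2)⁻¹) := by
  have hρx : ρ ^ 2 ≤ ‖x‖ ^ 2 := by gcongr
  have hx0 : 0 < ‖x‖ ^ 2 := lt_of_lt_of_le (by positivity) hρx
  have h : (1 + ‖x‖ ^ 2) / (a + ‖x‖ ^ 2) ≤ 1 + (ρ ^ 2)⁻¹ :=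
    calc (1 + ‖x‖ ^ 2) / (a + ‖x‖ ^ 2) ≤ (1 + ‖x‖ ^ 2) / ‖x‖ ^ 2 := by gcongr; linarith
      _ = 1 + (‖x‖ ^ 2)⁻¹ := by rw [add_div, div_self hx0.ne', one_div, add_comm]
      _ ≤ 1 + (ρ ^ 2)⁻¹ := by gcongr
  rw [logBump, ← Real.log_div (by positivity) (by positivity)]
  exact Real.log_le_log (by positivity) h

theorem logBump_le_indicator_add (ha : 0 < a) (ha1 : a ≤ 1) {ρ : ℝ} (hρ : 0 < ρ) (x : E) :
    logBump a x ≤ (ball 0 ρ).indicator (fun _ => -Real.log a) x + Real.log (1 + (ρ ^ 2)⁻¹) := by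
  by_cases hx : x ∈ ball 0 ρ
  · rw [indicator_of_mem hx]
    have : 0 ≤ Real.log (1 + (ρ ^ 2)⁻¹) := Real.log_nonneg (le_add_of_nonneg_right (by positivity))
    linarith [logBump_le_neg_log ha ha1 x]
  · rw [indicator_of_notMem hx, zero_add]
    exact logBump_le_log_one_add_inv_sq ha hρ (by simpa using hx)

variable [InnerProductSpace ℝ E]

theorem contDiff_logBump (ha : 0 < a) {n : WithTop ℕ∞} : ContDiff ℝ n (logBump (E := E) a) := by
  unfold logBump
  have hsq : ContDiff ℝ n (fun x : E => ‖x‖ ^ 2) := contDiff_norm_sq ℝ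
  exact ((contDiff_const.add hsq).log fun x => by positivity).sub
    ((contDiff_const.add hsq).log fun x => by positivity)

theorem hasGradientAt_logBump [CompleteSpace E] (ha : 0 < a) (x : E) :
    HasGradientAt (logBump a) ((2 / (1 + ‖x‖ ^ 2) - 2 / (a + ‖x‖ ^ 2)) • x) x := by
  have hsq := (hasStrictFDerivAt_norm_sq x).hasFDerivAt
  have h1 := (hsq.const_add 1).log (by positivity)
  have h2 := (hsq.const_add a).log (by positivity)
  rw [hasGradientAt_iff_hasFDerivAt]
  refine (h1.sub h2).congr_fderiv ?_
  ext y
  simp only [sub_apply, smul_apply, coe_innerSL_apply,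
    nsmul_eq_mul, Nat.cast_ofNat, smul_eq_mul, map_smul, InnerProductSpace.toDual_apply_apply]
  ring

theorem sq_two_div_sub_two_div_mul_le (ha : 0 < a) (ha1 : a ≤ 1) {u : ℝ} (hu : 0 ≤ u) :
    (2 / (1 + u) - 2 / (a + u)) ^ 2 * u ≤ 4 / (a + u) - 4 / (1 + u) := by
  have h1 : 0 < 1 + u := by linarith
  have h2 : 0 < a + u := by linarith
  rw [div_sub_div _ _ h1.ne' h2.ne', div_sub_div _ _ h2.ne' h1.ne', div_pow, div_mul_eq_mul_div,
    div_le_div_iff₀ (by positivity) (by positivity)]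
  have key : (1 - a) * u ≤ (1 + u) * (a + u) := by nlinarith
  have h3 : 0 ≤ 1 - a := by linarith
  nlinarith [mul_nonneg (mul_nonneg h3 (mul_pos h1 h2).le) (sub_nonneg.2 key)]

theorem norm_gradient_logBump_sq_le [CompleteSpace E] (ha : 0 < a) (ha1 : a ≤ 1) (x : E) :
    ‖gradient (logBump a) x‖ ^ 2 ≤ 4 / (a + ‖x‖ ^ 2) - 4 / (1 + ‖x‖ ^ 2) := by
  rw [(hasGradientAt_logBump ha x).gradient, norm_smul, mul_pow, Real.norm_eq_abs, sq_abs]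
  exact sq_two_div_sub_two_div_mul_le ha ha1 (sq_nonneg _)

end LogBump

theorem integral_logBump_le {E : Type*} [NormedAddCommGroup E] [MeasurableSpace E]
    [OpensMeasurableSpace E] (μ : Measure E) [IsFiniteMeasure μ] {a : ℝ} (ha : 0 < a) (ha1 : a ≤ 1)
    {ρ : ℝ} (hρ : 0 < ρ) :
    ∫ x, logBump a x ∂μ ≤
      μ.real (ball 0 ρ) * -Real.log a + μ.real univ * Real.log (1 + (ρ ^ 2)⁻¹) := by
  have hind : Integrable ((ball (0 : E) ρ).indicator fun _ => -Real.log a) μ :=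
    (integrable_const _).indicator measurableSet_ball
  calc ∫ x, logBump a x ∂μ
      ≤ ∫ x, (ball 0 ρ).indicator (fun _ => -Real.log a) x + Real.log (1 + (ρ ^ 2)⁻¹) ∂μ :=
        integral_mono_of_nonneg (.of_forall (logBump_nonneg ha ha1))
          (hind.add (integrable_const _)) (.of_forall (logBump_le_indicator_add ha ha1 hρ))
    _ = _ := by
        rw [integral_add hind (integrable_const _), integral_indicator_const _ measurableSet_ball,
          integral_const, smul_eq_mul, smul_eq_mul]

section Radial

theorem tendsto_log_add_sq_sub_log_one_add_sq (a : ℝ) :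
    Tendsto (fun r : ℝ => 2 * Real.log (a + r ^ 2) - 2 * Real.log (1 + r ^ 2)) atTop (𝓝 0) := by
  have hsq : Tendsto (fun r : ℝ => r ^ 2) atTop atTop := tendsto_pow_atTop two_ne_zero
  have hquot : Tendsto (fun r : ℝ => 1 - (1 - a) * (1 + r ^ 2)⁻¹) atTop (𝓝 1) := by
    simpa using tendsto_const_nhds.sub
      ((tendsto_inv_atTop_zero.comp (tendsto_atTop_add_const_left _ 1 hsq)).const_mul (1 - a))
  have hlog := ((Real.continuousAt_log one_ne_zero).tendsto.comp hquot).const_mul 2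
  rw [Real.log_one, mul_zero] at hlog
  refine hlog.congr' ?_
  filter_upwards [(tendsto_atTop_add_const_left _ a hsq).eventually_gt_atTop 0] with r hr
  have h1 : (0 : ℝ) < 1 + r ^ 2 := by positivity
  have hdiv : 1 - (1 - a) * (1 + r ^ 2)⁻¹ = (a + r ^ 2) / (1 + r ^ 2) := by
    field_simp
    ring
  simp only [Function.comp_apply, hdiv, Real.log_div hr.ne' h1.ne']
  ring

variable {a : ℝ}

theorem hasDerivAt_log_add_sq_sub_log_one_add_sq (ha : 0 < a) (r : ℝ) :
    HasDerivAt (fun r : ℝ => 2 * Real.log (a + r ^ 2) - 2 * Real.log (1 + r ^ 2))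
      (r * (4 / (a + r ^ 2) - 4 / (1 + r ^ 2))) r := by
  have hsq := hasDerivAt_pow 2 r
  have h1 := ((hsq.const_add a).log (by positivity)).const_mul 2
  have h2 := ((hsq.const_add 1).log (by positivity)).const_mul 2
  refine (h1.sub h2).congr_deriv ?_
  norm_num
  ring

theorem four_div_sub_four_div_nonneg (ha1 : a ≤ 1) {u : ℝ} (hu : 0 < a + u) :
    0 ≤ 4 / (a + u) - 4 / (1 + u) :=
  sub_nonneg.2 <| div_le_div_of_nonneg_left zero_le_four hu (by linarith)

theorem integrableOn_radial_four_div_sub_four_div (ha : 0 < a) (ha1 : a ≤ 1) :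
    IntegrableOn (fun r : ℝ => r * (4 / (a + r ^ 2) - 4 / (1 + r ^ 2))) (Ioi 0) :=
  integrableOn_Ioi_deriv_of_nonneg' (fun r _ => hasDerivAt_log_add_sq_sub_log_one_add_sq ha r)
    (fun r hr => mul_nonneg (le_of_lt hr) (four_div_sub_four_div_nonneg ha1 (by positivity)))
    (tendsto_log_add_sq_sub_log_one_add_sq a)

theorem integral_radial_four_div_sub_four_div (ha : 0 < a) (ha1 : a ≤ 1) :
    ∫ r in Ioi (0 : ℝ), r * (4 / (a + r ^ 2) - 4 / (1 + r ^ 2)) = -2 * Real.log a := by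
  rw [integral_Ioi_of_hasDerivAt_of_nonneg'
    (fun r _ => hasDerivAt_log_add_sq_sub_log_one_add_sq ha r)
    (fun r hr => mul_nonneg (le_of_lt hr) (four_div_sub_four_div_nonneg ha1 (by positivity)))
    (tendsto_log_add_sq_sub_log_one_add_sq a)]
  simp

variable {E : Type*} [NormedAddCommGroup E] [InnerProductSpace ℝ E] [FiniteDimensional ℝ E]
  [MeasurableSpace E] [BorelSpace E] (μ : Measure E) [μ.IsAddHaarMeasure]

theorem integrable_four_div_sub_four_div_norm_sq (hE : Module.finrank ℝ E = 2) (ha : 0 < a)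
    (ha1 : a ≤ 1) : Integrable (fun x : E => 4 / (a + ‖x‖ ^ 2) - 4 / (1 + ‖x‖ ^ 2)) μ := by
  have : Nontrivial E := Module.nontrivial_of_finrank_eq_succ hE
  rw [integrable_fun_norm_addHaar μ (f := fun r => 4 / (a + r ^ 2) - 4 / (1 + r ^ 2)), hE]
  simpa using integrableOn_radial_four_div_sub_four_div ha ha1

theorem integral_four_div_sub_four_div_norm_sq (hE : Module.finrank ℝ E = 2) (ha : 0 < a)
    (ha1 : a ≤ 1) :
    ∫ x : E, 4 / (a + ‖x‖ ^ 2) - 4 / (1 + ‖x‖ ^ 2) ∂μ = -4 * Real.log a * μ.real (ball 0 1) := by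
  have : Nontrivial E := Module.nontrivial_of_finrank_eq_succ hE
  rw [integral_fun_norm_addHaar μ (fun r => 4 / (a + r ^ 2) - 4 / (1 + r ^ 2)), hE]
  norm_num only [pow_one, smul_eq_mul, integral_radial_four_div_sub_four_div ha ha1]
  ring

theorem lintegral_norm_gradient_const_mul_logBump_sq_le (hE : Module.finrank ℝ E = 2)
    (ha : 0 < a) (ha1 : a ≤ 1) (c : ℝ) :
    ∫⁻ x, ENNReal.ofReal (‖gradient (fun y => c * logBump a y) x‖ ^ 2) ∂μ ≤
      ENNReal.ofReal (-4 * Real.log a * μ.real (ball 0 1) * c ^ 2) := by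
  have hdensity := integrable_four_div_sub_four_div_norm_sq μ hE ha ha1
  have hpoint (x : E) : ‖gradient (fun y => c * logBump a y) x‖ ^ 2 ≤
      c ^ 2 * (4 / (a + ‖x‖ ^ 2) - 4 / (1 + ‖x‖ ^ 2)) := by
    have hgrad := (hasGradientAt_logBump ha x).const_mul c
    rw [hgrad.gradient, norm_smul, mul_pow, Real.norm_eq_abs, sq_abs,
      ← (hasGradientAt_logBump ha x).gradient]
    exact mul_le_mul_of_nonneg_left (norm_gradient_logBump_sq_le ha ha1 x) (sq_nonneg c)
  calc ∫⁻ x, ENNReal.ofReal (‖gradient (fun y => c * logBump a y) x‖ ^ 2) ∂μ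
      ≤ ∫⁻ x, ENNReal.ofReal (c ^ 2 * (4 / (a + ‖x‖ ^ 2) - 4 / (1 + ‖x‖ ^ 2))) ∂μ :=
        lintegral_mono fun x => ofReal_le_ofReal (hpoint x)
    _ = ENNReal.ofReal (∫ x, c ^ 2 * (4 / (a + ‖x‖ ^ 2) - 4 / (1 + ‖x‖ ^ 2)) ∂μ) :=
        (ofReal_integral_eq_lintegral_ofReal (hdensity.const_mul _) (.of_forall fun x =>
          mul_nonneg (sq_nonneg c) (four_div_sub_four_div_nonneg ha1 (by positivity)))).symm
    _ = _ := by
        rw [integral_const_mul, integral_four_div_sub_four_div_norm_sq μ hE ha ha1, mul_comm]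

end Radial

noncomputable def scaledLogBump {E : Type*} [NormedAddCommGroup E] (m : ℝ) (x : E) : ℝ :=
  (4 * m)⁻¹ * logBump (Real.exp (-m ^ 2)) x

theorem abs_scaledLogBump_le {E : Type*} [NormedAddCommGroup E] {m : ℝ} (hm : 0 ≤ m) (x : E) :
    |scaledLogBump m x| ≤ (4 * m)⁻¹ * m ^ 2 := by
  have ha1 : Real.exp (-m ^ 2) ≤ 1 := Real.exp_le_one_iff.2 (neg_nonpos.2 (sq_nonneg m))
  have hle := logBump_le_neg_log (Real.exp_pos _) ha1 x
  rw [Real.log_exp, neg_neg] at hle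
  rw [scaledLogBump, abs_of_nonneg (mul_nonneg (by positivity) (logBump_nonneg (Real.exp_pos _) ha1 x))]
  gcongr

theorem log_one_add_sq_le_two_mul {x : ℝ} (hx : 0 ≤ x) : Real.log (1 + x ^ 2) ≤ 2 * x := by
  rw [Real.log_le_iff_le_exp (by positivity), show 2 * x = x + x by ring, Real.exp_add]
  nlinarith [Real.add_one_le_exp x]

section DimTwo

variable {m : ℝ}

theorem volume_real_ball_fin_two (r : ℝ) (hr : 0 ≤ r) :
    volume.real (ball (0 : EuclideanSpace ℝ (Fin 2)) r) = r ^ 2 * Real.pi := by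
  simp [measureReal_def, EuclideanSpace.volume_ball_fin_two, toReal_ofReal hr,
    toReal_ofReal Real.pi_nonneg]

theorem lintegral_norm_gradient_scaledLogBump_sq_le_one (hm : 0 < m) :
    ∫⁻ x : EuclideanSpace ℝ (Fin 2), ENNReal.ofReal (‖gradient (scaledLogBump m) x‖ ^ 2) ≤ 1 := by
  refine (lintegral_norm_gradient_const_mul_logBump_sq_le volume finrank_euclideanSpace_fin
    (Real.exp_pos _) (Real.exp_le_one_iff.2 (neg_nonpos.2 (sq_nonneg m))) _).trans
    (ofReal_le_one.2 ?_)
  rw [volume_real_ball_fin_two 1 zero_le_one, Real.log_exp]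
  field_simp
  nlinarith [Real.pi_le_four]

theorem le_integral_sub_integral_scaledLogBump (hm : 1 ≤ m) :
    Real.pi * (m - 3) / 4 ≤
      (∫ x, scaledLogBump m x ∂(volume.restrict (closedBall (0 : EuclideanSpace ℝ (Fin 2)) 1) univ •
        Measure.dirac (0 : EuclideanSpace ℝ (Fin 2)))) -
      ∫ x, scaledLogBump m x ∂(volume.restrict (closedBall (0 : EuclideanSpace ℝ (Fin 2)) 1)) := by
  set μ := volume.restrict (closedBall (0 : EuclideanSpace ℝ (Fin 2)) 1)
  have : IsFiniteMeasure μ := isFiniteMeasure_restrict.2 measure_closedBall_lt_top.ne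
  have hm0 : 0 < m := by linarith
  have hμ : μ.real univ = Real.pi := by
    simp [μ, measureReal_def, EuclideanSpace.volume_closedBall_fin_two, Real.pi_nonneg]
  have hball : μ.real (ball 0 m⁻¹) ≤ (m⁻¹) ^ 2 * Real.pi := by
    rw [← volume_real_ball_fin_two _ (by positivity), measureReal_restrict_apply measurableSet_ball]
    exact measureReal_mono inter_subset_left
  have hdirac : ∫ x, scaledLogBump m x ∂(μ univ • Measure.dirac (0 : EuclideanSpace ℝ (Fin 2))) =
      (4 * m)⁻¹ * (Real.pi * m ^ 2) := by
    rw [integral_smul_measure, integral_dirac, ← measureReal_def, hμ, scaledLogBump, logBump_zero,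
      Real.log_exp, neg_neg, smul_eq_mul]
    ring
  have hlogBump : ∫ x, logBump (Real.exp (-m ^ 2)) x ∂μ ≤ Real.pi * (1 + 2 * m) := by
    refine (integral_logBump_le μ (Real.exp_pos _) (Real.exp_le_one_iff.2
      (neg_nonpos.2 (sq_nonneg m))) (inv_pos.2 hm0)).trans ?_
    rw [hμ, Real.log_exp, neg_neg, inv_pow, inv_inv]
    have hsmall : μ.real (ball 0 m⁻¹) * m ^ 2 ≤ Real.pi := by
      calc μ.real (ball 0 m⁻¹) * m ^ 2 ≤ (m⁻¹) ^ 2 * Real.pi * m ^ 2 := by gcongr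
        _ = Real.pi := by field_simp
    nlinarith [log_one_add_sq_le_two_mul hm0.le, Real.pi_pos]
  have hμ_int : ∫ x, scaledLogBump m x ∂μ ≤ (4 * m)⁻¹ * (Real.pi * (1 + 2 * m)) := by
    unfold scaledLogBump
    rw [integral_const_mul]
    exact mul_le_mul_of_nonneg_left hlogBump (by positivity)
  rw [hdirac]
  calc Real.pi * (m - 3) / 4 ≤ (4 * m)⁻¹ * (Real.pi * (m ^ 2 - 1 - 2 * m)) := by
        rw [← sub_nonneg]
        have hgap : (4 * m)⁻¹ * (Real.pi * (m ^ 2 - 1 - 2 * m)) - Real.pi * (m - 3) / 4 =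
            Real.pi * (m - 1) / (4 * m) := by
          field_simp
          ring
        rw [hgap]
        have : 0 ≤ m - 1 := by linarith
        positivity
    _ ≤ _ := by linarith

end DimTwo

/-- In dimension 2, with `μ` the restriction of Lebesgue measure to the closed unit
ball and `ν = μ(ℝ²)·δ₀` the Dirac mass at the origin with the same total mass, one has
`W₂(μ, ν) < ∞` but `‖ν − μ‖_{Ḣ⁻¹} = ∞`. -/
theorem dirac_counterexample_dim_two :
    W2 (volume.restrict (Metric.closedBall (0 : EuclideanSpace ℝ (Fin 2)) 1))
        ((volume.restrict (Metric.closedBall (0 : EuclideanSpace ℝ (Fin 2)) 1) Set.univ) •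
          Measure.dirac (0 : EuclideanSpace ℝ (Fin 2))) < ∞ ∧
    HminusOneDiff volume
        (volume.restrict (Metric.closedBall (0 : EuclideanSpace ℝ (Fin 2)) 1))
        ((volume.restrict (Metric.closedBall (0 : EuclideanSpace ℝ (Fin 2)) 1) Set.univ) •
          Measure.dirac (0 : EuclideanSpace ℝ (Fin 2))) = ∞ := by
  refine ⟨W2_restrict_closedBall_smul_dirac_lt_top 0 1,
    HminusOneDiff_eq_top_of_forall_exists fun M => ?_⟩
  have hm : 1 ≤ 2 * |M| + 3 := by linarith [abs_nonneg M]
  refine ⟨scaledLogBump (2 * |M| + 3), ⟨_, abs_scaledLogBump_le (by linarith)⟩,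
    contDiff_const.mul (contDiff_logBump (Real.exp_pos _)),
    lintegral_norm_gradient_scaledLogBump_sq_le_one (by linarith),
    le_trans ?_ (le_integral_sub_integral_scaledLogBump hm)⟩
  nlinarith [Real.pi_gt_three, le_abs_self M, abs_nonneg M]
end
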